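/- arXiv:0806.1403 — 2 statements merged into one kernel-verified Lean document; each statement's English description precedes it below -/
import Mathlib

section
/- The Ramsey number R(3,4) equals 9: every 2-coloring of the edges of K₉ into colors 1 and 2 contains a triangle in color 1 or a 4-clique in color 2, and there exists such a coloring of K₈ with neither. -/
/-
Let `G` be the graph of the edges of color `0`, so the edges of color `1` form `Gᶜ`. If `G` is
triangle-free, the neighbourhood of any vertex is independent, so `Gᶜ.CliqueFree 4` bounds every
degree of `G` by `3`. A vertex with six non-neighbours would, by `R(3, 3) = 6`, see either a
triangle of `G` or a triangle of `Gᶜ` that extends by the vertex to a `4`-clique of `Gᶜ`. Hence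
on `9` vertices `G` would be `3`-regular, which the handshake lemma forbids. The Wagner graph on
`8` vertices shows the bound is sharp.
-/

open SimpleGraph

/-- A clique of `G` all of whose edges receive color `i`. -/
def MonoClique {V : Type*} (G : SimpleGraph V) (c : Sym2 V → Fin 2) (i : Fin 2)
    (n : ℕ) (s : Finset V) : Prop :=
  G.IsNClique n s ∧ ∀ x ∈ s, ∀ y ∈ s, x ≠ y → c s(x, y) = i

open Finset

namespace SimpleGraph

variable {V : Type*} {G : SimpleGraph V}

theorem exists_triangle_or_compl_isNClique_of_forall_adj [DecidableEq V] {v : V} {t : Finset V}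
    (ht : ∀ x ∈ t, G.Adj v x) :
    (∃ u ⊆ insert v t, G.IsNClique 3 u) ∨ Gᶜ.IsNClique #t t := by
  by_cases hedge : ∃ x ∈ t, ∃ y ∈ t, G.Adj x y
  · obtain ⟨x, hx, y, hy, hxy⟩ := hedge
    refine .inl ⟨{v, x, y}, ?_, is3Clique_triple_iff.mpr ⟨ht x hx, ht y hy, hxy⟩⟩
    simp [insert_subset_iff, hx, hy]
  · push Not at hedge
    exact .inr (G.isNClique_compl.mpr ⟨fun x hx y hy _ => hedge x hx y hy, rfl⟩)

theorem exists_subset_isNClique_three_or_compl_of_forall_adj [DecidableEq V] {s t : Finset V}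
    {v : V} (hv : v ∈ s) (hts : t ⊆ s) (ht : #t = 3) (hadj : ∀ x ∈ t, G.Adj v x) :
    ∃ u ⊆ s, G.IsNClique 3 u ∨ Gᶜ.IsNClique 3 u := by
  rcases exists_triangle_or_compl_isNClique_of_forall_adj hadj with ⟨u, hu, htri⟩ | hcompl
  · exact ⟨u, hu.trans (insert_subset hv hts), .inl htri⟩
  · exact ⟨t, hts, .inr (ht ▸ hcompl)⟩

theorem exists_isNClique_three_or_compl_isNClique_three {s : Finset V} (hs : 6 ≤ #s) :
    ∃ t ⊆ s, G.IsNClique 3 t ∨ Gᶜ.IsNClique 3 t := by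
  classical
  obtain ⟨v, hv⟩ : s.Nonempty := card_pos.mp (by omega)
  have hsplit := card_filter_add_card_filter_not (s := s.erase v) (G.Adj v)
  rw [card_erase_of_mem hv] at hsplit
  by_cases hN : 3 ≤ #((s.erase v).filter (G.Adj v))
  · obtain ⟨t, hts, ht⟩ := exists_subset_card_eq hN
    exact exists_subset_isNClique_three_or_compl_of_forall_adj hv
      (hts.trans (filter_subset _ _) |>.trans (erase_subset _ _)) ht
      fun x hx => (mem_filter.mp (hts hx)).2
  · obtain ⟨t, hts, ht⟩ :=
      exists_subset_card_eq (s := (s.erase v).filter (fun x => ¬ G.Adj v x)) (n := 3) (by omega)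
    have hadj : ∀ x ∈ t, Gᶜ.Adj v x := fun x hx => by
      obtain ⟨hxs, hvx⟩ := mem_filter.mp (hts hx)
      exact (compl_adj G v x).mpr ⟨(ne_of_mem_erase hxs).symm, hvx⟩
    obtain ⟨u, hus, hu⟩ := exists_subset_isNClique_three_or_compl_of_forall_adj hv
      (hts.trans (filter_subset _ _) |>.trans (erase_subset _ _)) ht hadj
    exact ⟨u, hus, by rwa [compl_compl, or_comm] at hu⟩

theorem degree_lt_of_cliqueFree_three_of_compl_cliqueFree {n : ℕ} (h3 : G.CliqueFree 3)
    (hn : Gᶜ.CliqueFree n) (v : V) [Fintype (G.neighborSet v)] : G.degree v < n := by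
  classical
  by_contra! hdeg
  obtain ⟨t, hts, ht⟩ := exists_subset_card_eq (s := G.neighborFinset v) hdeg
  rcases exists_triangle_or_compl_isNClique_of_forall_adj (G := G) (v := v) (t := t)
    (fun x hx => (mem_neighborFinset G v x).mp (hts hx)) with ⟨u, -, hu⟩ | hcompl
  · exact h3 u hu
  · exact hn t (ht ▸ hcompl)

theorem compl_degree_le_five_of_cliqueFree (h3 : G.CliqueFree 3) (h4 : Gᶜ.CliqueFree 4) (v : V)
    [Fintype (Gᶜ.neighborSet v)] : Gᶜ.degree v ≤ 5 := by
  classical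
  by_contra! hdeg
  obtain ⟨s, hsN, hs⟩ := exists_subset_card_eq (s := Gᶜ.neighborFinset v) hdeg
  obtain ⟨t, hts, ht | ht⟩ := exists_isNClique_three_or_compl_isNClique_three (G := G) hs.ge
  · exact h3 t ht
  · exact h4 _ (ht.insert fun x hx => (mem_neighborFinset _ v x).mp (hsN (hts hx)))

theorem card_le_eight_of_cliqueFree_three_of_compl_cliqueFree_four [Fintype V]
    (h3 : G.CliqueFree 3) (h4 : Gᶜ.CliqueFree 4) : Fintype.card V ≤ 8 := by
  classical
  have hdeg v : Fintype.card V ≤ G.degree v + 6 := by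
    have := compl_degree_le_five_of_cliqueFree h3 h4 v
    rw [degree_compl] at this
    omega
  by_contra! hcard
  have hreg v : G.degree v = 3 := by
    have := degree_lt_of_cliqueFree_three_of_compl_cliqueFree h3 h4 v
    have := hdeg v
    omega
  -- A 3-regular graph on 9 vertices would violate the handshake lemma.
  have hsum := sum_degrees_eq_twice_card_edges G
  simp only [hreg, sum_const, card_univ, smul_eq_mul] at hsum
  obtain ⟨v⟩ : Nonempty V := Fintype.card_pos_iff.mp (by omega)
  have := hdeg v
  have := hreg v
  omega

end SimpleGraph

def colorGraph {V : Type*} (c : Sym2 V → Fin 2) (i : Fin 2) : SimpleGraph V where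
  Adj x y := x ≠ y ∧ c s(x, y) = i
  symm := ⟨fun _ _ h => ⟨h.1.symm, Sym2.eq_swap ▸ h.2⟩⟩
  loopless := ⟨fun _ h => h.1 rfl⟩

section Coloring

variable {V : Type*} (c : Sym2 V → Fin 2)

theorem compl_colorGraph_zero : (colorGraph c 0)ᶜ = colorGraph c 1 := by
  have hne : ∀ a : Fin 2, a ≠ 0 ↔ a = 1 := by decide
  ext x y
  simp only [compl_adj, colorGraph, ← hne]
  tauto

theorem monoClique_top_iff {i : Fin 2} {n : ℕ} {s : Finset V} :
    MonoClique ⊤ c i n s ↔ (colorGraph c i).IsNClique n s := by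
  simp only [MonoClique, isNClique_iff, IsClique, Set.Pairwise, top_adj, colorGraph,
    Finset.mem_coe]
  aesop

theorem exists_monoClique_three_or_four [Fintype V] (hV : 9 ≤ Fintype.card V) :
    (∃ s, MonoClique ⊤ c 0 3 s) ∨ (∃ s, MonoClique ⊤ c 1 4 s) := by
  simp only [monoClique_top_iff, ← compl_colorGraph_zero]
  by_contra! h
  have := card_le_eight_of_cliqueFree_three_of_compl_cliqueFree_four h.1 h.2
  omega

end Coloring

instance {V : Type*} [DecidableEq V] (G : SimpleGraph V) [DecidableRel G.Adj]
    (c : Sym2 V → Fin 2) (i : Fin 2) (n : ℕ) (s : Finset V) :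
    Decidable (MonoClique G c i n s) :=
  inferInstanceAs (Decidable (_ ∧ _))

/-- Colors by `0` the edges of the Wagner graph, the circulant graph on `ℤ/8` with
connection set `{±1, 4}`. -/
def wagnerColoring : Sym2 (Fin 8) → Fin 2 :=
  Sym2.lift ⟨fun x y => if x - y ∈ ({1, 4, 7} : Finset (Fin 8)) then 0 else 1, by decide⟩

set_option maxRecDepth 10000 in
theorem wagnerColoring_not_exists_monoClique :
    ¬ ((∃ s, MonoClique (⊤ : SimpleGraph (Fin 8)) wagnerColoring 0 3 s) ∨
      (∃ s, MonoClique (⊤ : SimpleGraph (Fin 8)) wagnerColoring 1 4 s)) := by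
  decide

theorem stmt6 :
    (∀ c : Sym2 (Fin 9) → Fin 2,
      (∃ s, MonoClique (⊤ : SimpleGraph (Fin 9)) c 0 3 s) ∨
      (∃ s, MonoClique (⊤ : SimpleGraph (Fin 9)) c 1 4 s)) ∧
    (∃ c : Sym2 (Fin 8) → Fin 2,
      ¬ ((∃ s, MonoClique (⊤ : SimpleGraph (Fin 8)) c 0 3 s) ∨
         (∃ s, MonoClique (⊤ : SimpleGraph (Fin 8)) c 1 4 s))) :=
  ⟨fun c => exists_monoClique_three_or_four c (by simp),
    wagnerColoring, wagnerColoring_not_exists_monoClique⟩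
end

section
/- Let Q be the 13-vertex Greenwood–Gleason graph (the Paley-type graph on GF(13) with x ~ y iff x − y is a cubic residue, i.e., x − y ∈ {±1, ±5, ±8} mod 13... equivalently the cyclic graph C₁₃(1,5) used in the R(3,5) lower bound construction). Then cl(Q) = 4 and α(Q) = 2. -/
/-!
The 4-clique `{0, 2, 4, 6}` and the independent pair `{0, 1}` give the lower bounds. For the
upper bounds, `Q` is invariant under the translations of `ℤ/13`, so a 5-clique of `Q` may be
assumed to contain `0`, which leaves a finite check over its remaining four vertices. The
complement `C₁₃(1, 5)` is triangle-free because no three elements of `{±1, ±5}` sum to `0`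
modulo `13`.
-/

open SimpleGraph

/-- The Greenwood–Gleason graph `Q`: the complement of the circulant graph on
`ℤ/13` with connection set `{±1, ±5}`. -/
def Q : SimpleGraph (ZMod 13) :=
  (SimpleGraph.circulantGraph {1, -1, 5, -5})ᶜ

namespace SimpleGraph

variable {α : Type*} {G : SimpleGraph α} {n : ℕ} {s : Finset α}

theorem cliqueNum_eq_of_isNClique_of_cliqueFree [Finite α] (hs : G.IsNClique n s)
    (hG : G.CliqueFree (n + 1)) : G.cliqueNum = n := by
  obtain ⟨t, ht⟩ := G.exists_isNClique_cliqueNum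
  exact le_antisymm (le_of_not_gt fun hlt => ht.not_cliqueFree (hG.mono hlt))
    (hs.card_eq ▸ hs.isClique.card_le_cliqueNum)

section AddGroup

variable [AddGroup α] [DecidableEq α]

theorem IsNClique.image_sub_right (hG : ∀ u v d : α, G.Adj (u + d) (v + d) ↔ G.Adj u v)
    (hs : G.IsNClique n s) (a : α) : G.IsNClique n (s.image (· - a)) := by
  refine ⟨?_, ?_⟩
  · rw [Finset.coe_image, isClique_iff, sub_left_injective.injOn.pairwise_image]
    exact hs.isClique.imp fun u v huv => by simpa [sub_eq_add_neg] using (hG u v (-a)).2 huv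
  · rw [Finset.card_image_of_injective s sub_left_injective, hs.card_eq]

theorem cliqueFree_of_forall_zero_mem (hG : ∀ u v d : α, G.Adj (u + d) (v + d) ↔ G.Adj u v)
    (hn : n ≠ 0) (h : ∀ s : Finset α, 0 ∈ s → ¬ G.IsNClique n s) : G.CliqueFree n := by
  intro s hs
  obtain ⟨a, ha⟩ := Finset.card_pos.1 (hs.card_eq ▸ Nat.pos_of_ne_zero hn)
  exact h (s.image (· - a)) (Finset.mem_image.2 ⟨a, ha, sub_self a⟩) (hs.image_sub_right hG a)

end AddGroup

end SimpleGraph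

instance : DecidableRel Q.Adj :=
  inferInstanceAs (DecidableRel (circulantGraph {1, -1, 5, -5} : SimpleGraph (ZMod 13))ᶜ.Adj)

theorem Q_adj_add_right (u v d : ZMod 13) : Q.Adj (u + d) (v + d) ↔ Q.Adj u v := by
  simp [Q]

set_option maxRecDepth 10000 in
theorem Q_not_five_clique_through_zero : ∀ b c d e : ZMod 13,
    ¬(Q.Adj 0 b ∧ Q.Adj 0 c ∧ Q.Adj 0 d ∧ Q.Adj 0 e ∧ Q.Adj b c ∧ Q.Adj b d ∧ Q.Adj b e ∧
      Q.Adj c d ∧ Q.Adj c e ∧ Q.Adj d e) := by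
  decide

theorem Q_cliqueFree_five : Q.CliqueFree 5 := by
  refine cliqueFree_of_forall_zero_mem Q_adj_add_right (by norm_num) fun s h0 hs => ?_
  obtain ⟨b, c, d, e, hbc, hbd, hbe, hcd, hce, hde, hs'⟩ :=
    Finset.card_eq_four.1 (hs.erase_of_mem h0).card_eq
  have mem : ∀ x ∈ ({b, c, d, e} : Finset (ZMod 13)), x ≠ 0 ∧ x ∈ s := fun x hx =>
    Finset.mem_erase.1 (hs' ▸ hx)
  simp only [Finset.mem_insert, Finset.mem_singleton, forall_eq_or_imp, forall_eq] at mem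
  obtain ⟨⟨hb0, hb⟩, ⟨hc0, hc⟩, ⟨hd0, hd⟩, ⟨he0, he⟩⟩ := mem
  have adj {x y : ZMod 13} (hx : x ∈ s) (hy : y ∈ s) (hxy : x ≠ y) : Q.Adj x y :=
    hs.isClique hx hy hxy
  exact Q_not_five_clique_through_zero b c d e
    ⟨adj h0 hb hb0.symm, adj h0 hc hc0.symm, adj h0 hd hd0.symm, adj h0 he he0.symm,
      adj hb hc hbc, adj hb hd hbd, adj hb he hbe, adj hc hd hcd, adj hc he hce, adj hd he hde⟩

theorem Q_compl_cliqueFree_three : Qᶜ.CliqueFree 3 := by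
  have h : ∀ a b c : ZMod 13, ¬(Qᶜ.Adj a b ∧ Qᶜ.Adj a c ∧ Qᶜ.Adj b c) := by decide
  rintro s hs
  obtain ⟨a, b, c, hab, hac, hbc, -⟩ := is3Clique_iff.1 hs
  exact h a b c ⟨hab, hac, hbc⟩

theorem stmt8 : Q.cliqueNum = 4 ∧ Qᶜ.cliqueNum = 2 :=
  ⟨cliqueNum_eq_of_isNClique_of_cliqueFree (s := {0, 2, 4, 6}) (by decide) Q_cliqueFree_five,
    cliqueNum_eq_of_isNClique_of_cliqueFree (s := {0, 1}) (by decide) Q_compl_cliqueFree_three⟩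
end
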